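/- arXiv:1306.3788 — 2 statements merged into one kernel-verified Lean document; each statement's English description precedes it below -/
import Mathlib

section
/- The valuation divisibilities on a commutative ring A (total divisibilities with cancellation) correspond 1-1 to Bourbaki valuations of A: every total divisibility with cancellation arises as a|b ⟺ v(a) ≤ v(b) for a unique (up to equivalence) Bourbaki valuation v. -/
def IsDivisibility {A : Type*} [CommRing A] (D : A → A → Prop) : Prop :=
  (∀ a, D a a) ∧ (∀ a b c : A, D a b → D b c → D a c) ∧
  (∀ a b c : A, D a b → D a c → D a (b - c)) ∧
  (∀ a b c : A, D a b → D (a * c) (b * c)) ∧ ¬ D 0 1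

universe u v

/-! Reading `a ∣ b` as `v b ≤ v a`, the axioms of a valuation divisibility are exactly those of
Mathlib's `ValuativeRel`, whose canonical valuation into its value group `ValueGroupWithZero`
realises the relation. Uniqueness is immediate, since equivalence of valuations only compares
the orders they induce on `A`. -/

namespace IsDivisibility

variable {A : Type u} [CommRing A] {D : A → A → Prop}

theorem rel_zero (hD : IsDivisibility D) (a : A) : D a 0 := by
  simpa using hD.2.2.1 a a a (hD.1 a) (hD.1 a)

theorem rel_add (hD : IsDivisibility D) {a b c : A} (hb : D a b) (hc : D a c) : D a (b + c) := by
  have hneg : D a (-c) := by simpa using hD.2.2.1 a 0 c (hD.rel_zero a) hc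
  simpa using hD.2.2.1 a b (-c) hb hneg

abbrev toValuativeRel (hD : IsDivisibility D) (htot : ∀ a b : A, D a b ∨ D b a)
    (hcanc : ∀ a b c : A, ¬ D 0 c → D (a * c) (b * c) → D a b) : ValuativeRel A where
  vle x y := D y x
  vle_total x y := htot y x
  vle_trans hxy hyz := hD.2.1 _ _ _ hyz hxy
  vle_add hx hy := hD.rel_add hx hy
  mul_vle_mul_left h z := hD.2.2.2.1 _ _ z h
  vle_mul_cancel hz h := hcanc _ _ _ hz h
  not_vle_one_zero := hD.2.2.2.2
  vle_mul_comm {x y} := by rw [mul_comm y x]; exact hD.1 _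

theorem exists_valuation (hD : IsDivisibility D) (htot : ∀ a b : A, D a b ∨ D b a)
    (hcanc : ∀ a b c : A, ¬ D 0 c → D (a * c) (b * c) → D a b) :
    ∃ (Γ₀ : Type u) (_ : LinearOrderedCommGroupWithZero Γ₀) (v : Valuation A Γ₀),
      ∀ a b : A, D a b ↔ v b ≤ v a := by
  let := hD.toValuativeRel htot hcanc
  exact ⟨_, inferInstance, ValuativeRel.valuation A,
    fun a b ↦ (ValuativeRel.valuation A).vle_iff_le⟩

end IsDivisibility

theorem stmt_10 {A : Type u} [CommRing A] (D : A → A → Prop)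
    (hD : IsDivisibility D) (htot : ∀ a b : A, D a b ∨ D b a)
    (hcanc : ∀ a b c : A, ¬ D 0 c → D (a * c) (b * c) → D a b) :
    ∃ (Γ₀ : Type u) (_ : LinearOrderedCommGroupWithZero Γ₀) (v : Valuation A Γ₀),
      (∀ a b : A, D a b ↔ v b ≤ v a) ∧
      ∀ (Γ₀' : Type v) (_ : LinearOrderedCommGroupWithZero Γ₀') (w : Valuation A Γ₀'),
        (∀ a b : A, D a b ↔ w b ≤ w a) → v.IsEquiv w := by
  obtain ⟨Γ₀, _, v, hv⟩ := hD.exists_valuation htot hcanc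
  exact ⟨Γ₀, inferInstance, v, hv, fun _ _ w hw x y ↦ (hv y x).symm.trans (hw y x)⟩
end

section
/- A commutative ring A with ℚ ⊆ A admits a p-divisibility if and only if there exists a unital ring homomorphism δ from A into some p-valued field (a field of characteristic 0 carrying a p-valuation). -/
def IsPDivisibility (p : ℕ) {A : Type*} [CommRing A] (D : A → A → Prop) : Prop :=
  IsDivisibility D ∧
  (∀ a : A, ¬ D 0 a → ¬ D ((p : A) * a) a) ∧
  (∀ a b : A, D ((p : A) * ((a ^ p * b - b ^ p * a) ^ 2 - (b ^ (p + 1)) ^ 2))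
      ((a ^ p * b - b ^ p * a) * b ^ (p + 1)))

/-- `x` lies in the maximal ideal of the valuation subring `O`. -/
def MemMaxIdeal {F : Type*} [Field F] (O : ValuationSubring F) (x : F) : Prop :=
  x ∈ O ∧ (x = 0 ∨ x⁻¹ ∉ O)

/-- `O` is the valuation ring of a `p`-valuation on `F`: `p` lies in the maximal
ideal, `v p` is the minimal positive value, and the residue field is `𝔽_p`. -/
def IsPValuationRing (p : ℕ) {F : Type*} [Field F] (O : ValuationSubring F) : Prop :=
  MemMaxIdeal O (p : F) ∧
  (∀ x : F, MemMaxIdeal O x → x / (p : F) ∈ O) ∧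
  (∀ x : F, x ∈ O → ∃ n : Fin p, MemMaxIdeal O (x - (n : ℕ)))

/-!
If `O` is a `p`-valuation ring and `δ : A →+* F`, then "`δ a` divides `δ b` in `O`" is a
`p`-divisibility: axiom (6) holds because `1 / p ∉ O`, and axiom (7) because the Kochen operator
`γ z = (z ^ p - z) / (p * ((z ^ p - z) ^ 2 - 1))` maps `F` into `O`.

Conversely, enlarge `D` by Zorn's lemma to a maximal `p`-divisibility. Maximality allows
cancelling factors outside the radical `r` of the support `{a | 0 ∣ a}`, so `r` is prime. In the
residue field `K` of `r`, the fractions `W / Y` with `Y ∣ W` and `Y ∉ r` form a subring `G`;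
axiom (6) shows that `p` is not invertible in `G`, and axiom (7) that `γ K ⊆ G`. A valuation ring
`O ⊇ G` with `p` in its maximal ideal is then a `p`-valuation ring, since for `x ∈ O` the identity
`x ^ p - x = p * ((x ^ p - x) ^ 2 - 1) * γ x` puts `x ^ p - x` into `p O`: this forces the residue
field to be `𝔽_p` and `v p` to be the least positive value.
-/

open Polynomial in
theorem pow_eq_self_iff_exists_fin {k : Type*} [Field k] {p : ℕ} [hp : Fact p.Prime] [CharP k p]
    {y : k} : y ^ p = y ↔ ∃ n : Fin p, y = (n : ℕ) := by
  constructor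
  · intro hy
    have hsplit : (X ^ p - X : (ZMod p)[X]).Splits := by
      rw [splits_iff_card_roots, FiniteField.X_pow_card_sub_X_natDegree_eq _ hp.out.one_lt]
      simpa [ZMod.card] using congrArg Multiset.card (FiniteField.roots_X_pow_card_sub_X (ZMod p))
    obtain ⟨a, rfl⟩ := hsplit.mem_range_of_isRoot (x := y)
      (FiniteField.X_pow_card_sub_X_ne_zero _ hp.out.one_lt)
      (i := ZMod.castHom dvd_rfl k) (by simp [hy])
    exact ⟨⟨a.val, a.val_lt⟩, by simp⟩
  · rintro ⟨n, rfl⟩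
    exact (frobenius_def (R := k) (p := p) (n : k)).symm.trans (map_natCast (frobenius k p) n)

namespace ValuationSubring

variable {F : Type*} [Field F] {O : ValuationSubring F} {a b : F}

lemma mul_mem_nonunits (ha : a ∈ O.nonunits) (hb : b ∈ O) : a * b ∈ O.nonunits := by
  rw [mem_nonunits_iff, map_mul]
  exact Left.mul_lt_one_of_lt_of_le ha ((valuation_le_one_iff O b).mpr hb)

lemma pow_mem_nonunits (ha : a ∈ O.nonunits) {n : ℕ} (hn : n ≠ 0) : a ^ n ∈ O.nonunits := by
  obtain ⟨m, rfl⟩ := Nat.exists_eq_succ_of_ne_zero hn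
  rw [pow_succ']
  exact mul_mem_nonunits ha (pow_mem (nonunits_subset ha) m)

lemma one_notMem_nonunits (O : ValuationSubring F) : (1 : F) ∉ O.nonunits := by
  simp [mem_nonunits_iff]

lemma one_sub_ne_zero_of_mem_nonunits (ha : a ∈ O.nonunits) : 1 - a ≠ 0 := by
  rw [sub_ne_zero]
  rintro rfl
  exact O.one_notMem_nonunits ha

lemma inv_one_sub_mem (ha : a ∈ O.nonunits) : (1 - a)⁻¹ ∈ O := by
  rw [← valuation_le_one_iff, map_inv₀, Valuation.map_one_sub_of_lt _ ha, inv_one]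

lemma pow_sub_self_notMem {p : ℕ} (hp : 1 < p) {z : F} (hz : z ∉ O) : z ^ p - z ∉ O := by
  rw [← valuation_le_one_iff, not_le] at hz ⊢
  rw [Valuation.map_sub_eq_of_lt_left, map_pow]
  · exact one_lt_pow' hz (by omega)
  · rw [map_pow]
    exact lt_self_pow₀ hz hp

lemma charP_residueField {p : ℕ} (hp : p.Prime) (hpO : (p : F) ∈ O.nonunits) :
    CharP (IsLocalRing.ResidueField O) p := by
  rw [CharP.charP_iff_prime_eq_zero hp, ← map_natCast (IsLocalRing.residue O),
    IsLocalRing.residue_eq_zero_iff, ← coe_mem_nonunits_iff]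
  simpa using hpO

lemma exists_sub_natCast_mem_nonunits_iff {p : ℕ} (hp : p.Prime) (hpO : (p : F) ∈ O.nonunits)
    {x : F} (hx : x ∈ O) :
    (∃ n : Fin p, x - (n : ℕ) ∈ O.nonunits) ↔ x ^ p - x ∈ O.nonunits := by
  have := Fact.mk hp
  have := charP_residueField hp hpO
  lift x to O using hx
  have hsub (n : ℕ) : (x : F) - n = ((x - n : O) : F) := by simp
  have hfrob : (x : F) ^ p - x = ((x ^ p - x : O) : F) := by simp
  simp only [hsub, hfrob, coe_mem_nonunits_iff, ← IsLocalRing.residue_eq_zero_iff, map_sub,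
    map_pow, map_natCast, sub_eq_zero]
  exact pow_eq_self_iff_exists_fin.symm

end ValuationSubring

section Kochen

open ValuationSubring

variable {F : Type*} [Field F] {O : ValuationSubring F} {p : ℕ}

/-- The operator `γ` of the header. It takes the junk value `0` where `(z ^ p - z) ^ 2 = 1`, which
is why its integrality is always paired with `(z ^ p - z) ^ 2 ≠ 1` below. -/
def kochen (p : ℕ) (z : F) : F := (z ^ p - z) / (p * ((z ^ p - z) ^ 2 - 1))

lemma pow_sub_self_div_mul_pow_succ (p : ℕ) {x y : F} (hy : y ≠ 0) :
    ((x / y) ^ p - x / y) * y ^ (p + 1) = x ^ p * y - y ^ p * x := by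
  have h1 : (x / y) ^ p * y ^ p = x ^ p := by rw [div_pow, div_mul_cancel₀ _ (pow_ne_zero p hy)]
  have h2 : x / y * y = x := div_mul_cancel₀ x hy
  linear_combination y * h1 - y ^ p * h2

lemma kochen_div (p : ℕ) {x y : F} (hy : y ≠ 0) :
    kochen p (x / y) = (x ^ p * y - y ^ p * x) * y ^ (p + 1) /
      (p * ((x ^ p * y - y ^ p * x) ^ 2 - (y ^ (p + 1)) ^ 2)) := by
  rw [← pow_sub_self_div_mul_pow_succ p hy, kochen,
    ← mul_div_mul_right _ _ (pow_ne_zero 2 (pow_ne_zero (p + 1) hy))]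
  ring

lemma memMaxIdeal_iff {x : F} : MemMaxIdeal O x ↔ x ∈ O.nonunits := by
  rw [mem_nonunits_iff_or]
  exact ⟨And.right, fun h => ⟨nonunits_subset ((mem_nonunits_iff_or O).mpr h), h⟩⟩

lemma isPValuationRing_iff : IsPValuationRing p O ↔ (p : F) ∈ O.nonunits ∧
    (∀ x ∈ O.nonunits, x / p ∈ O) ∧ ∀ x ∈ O, ∃ n : Fin p, x - (n : ℕ) ∈ O.nonunits := by
  simp only [IsPValuationRing, memMaxIdeal_iff]

lemma div_natCast_mem_of_pow_sub_self_div_mem (hp : 1 < p) {x : F} (hx : x ∈ O.nonunits)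
    (h : (x ^ p - x) / p ∈ O) : x / p ∈ O := by
  have hxp := pow_mem_nonunits hx (Nat.sub_ne_zero_of_lt hp)
  have hne := one_sub_ne_zero_of_mem_nonunits hxp
  have : x / p = (x ^ p - x) / p * -(1 - x ^ (p - 1))⁻¹ := by
    rw [show x ^ p = x * x ^ (p - 1) by rw [← pow_succ']; congr; omega]
    field_simp
    ring
  rw [this]
  exact mul_mem h (neg_mem (inv_one_sub_mem hxp))

lemma IsPValuationRing.pow_sub_self_mem_nonunits (hO : IsPValuationRing p O) (hp : p.Prime)
    {x : F} (hx : x ∈ O) : x ^ p - x ∈ O.nonunits := by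
  obtain ⟨hpO, -, hres⟩ := isPValuationRing_iff.mp hO
  exact (exists_sub_natCast_mem_nonunits_iff hp hpO hx).mp (hres x hx)

lemma IsPValuationRing.kochen_mem (hO : IsPValuationRing p O) (hp : p.Prime) (z : F) :
    (z ^ p - z) ^ 2 ≠ 1 ∧ kochen p z ∈ O := by
  obtain ⟨-, hmin, -⟩ := isPValuationRing_iff.mp hO
  unfold kochen
  set t := z ^ p - z
  by_cases hz : z ∈ O
  · have ht : t ∈ O.nonunits := hO.pow_sub_self_mem_nonunits hp hz
    have ht2 := pow_mem_nonunits ht two_ne_zero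
    refine ⟨fun h => O.one_notMem_nonunits (h ▸ ht2), ?_⟩
    have : t / (p * (t ^ 2 - 1)) = t / p * -(1 - t ^ 2)⁻¹ := by
      rw [← inv_neg, neg_sub, div_mul_eq_div_div, div_eq_mul_inv]
    rw [this]
    exact mul_mem (hmin t ht) (neg_mem (inv_one_sub_mem ht2))
  · have ht : t ∉ O := pow_sub_self_notMem hp.one_lt hz
    have ht0 : t ≠ 0 := fun h => ht (by rw [h]; exact O.zero_mem)
    have hti := (inv_mem_nonunits_iff O).mpr (Or.inr ht)
    have hti2 := pow_mem_nonunits hti two_ne_zero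
    refine ⟨fun h => O.one_notMem_nonunits (by rwa [inv_pow, h, inv_one] at hti2), ?_⟩
    have : t / (p * (t ^ 2 - 1)) = t⁻¹ / p * (1 - t⁻¹ ^ 2)⁻¹ := by
      have := one_sub_ne_zero_of_mem_nonunits hti2
      field_simp
    rw [this]
    exact mul_mem (hmin _ hti) (inv_one_sub_mem hti2)

lemma isPValuationRing_of_kochen_mem (hp : p.Prime) (hp0 : (p : F) ≠ 0)
    (hpO : (p : F) ∈ O.nonunits) (hK : ∀ z : F, (z ^ p - z) ^ 2 ≠ 1 ∧ kochen p z ∈ O) :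
    IsPValuationRing p O := by
  have hdiv : ∀ x ∈ O, (x ^ p - x) / p ∈ O := by
    intro x hx
    obtain ⟨hne, hk⟩ := hK x
    have : (x ^ p - x) / p = ((x ^ p - x) ^ 2 - 1) * kochen p x := by
      unfold kochen
      field_simp [sub_ne_zero.mpr hne]
    rw [this]
    exact mul_mem (sub_mem (pow_mem (sub_mem (pow_mem hx p) hx) 2) O.one_mem) hk
  refine isPValuationRing_iff.mpr ⟨hpO, fun x hx => ?_, fun x hx => ?_⟩
  · exact div_natCast_mem_of_pow_sub_self_div_mem hp.one_lt hx (hdiv x (nonunits_subset hx))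
  · refine (exists_sub_natCast_mem_nonunits_iff hp hpO hx).mpr ?_
    rw [← mul_div_cancel₀ (x ^ p - x) hp0]
    exact mul_mem_nonunits hpO (hdiv x hx)

theorem isPValuationRing_iff_kochen (hp : p.Prime) (hp0 : (p : F) ≠ 0) :
    IsPValuationRing p O ↔
      (p : F) ∈ O.nonunits ∧ ∀ z : F, (z ^ p - z) ^ 2 ≠ 1 ∧ kochen p z ∈ O :=
  ⟨fun hO => ⟨(isPValuationRing_iff.mp hO).1, hO.kochen_mem hp⟩,
    fun ⟨hpO, hK⟩ => isPValuationRing_of_kochen_mem hp hp0 hpO hK⟩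

end Kochen

lemma isDivisibility_comap {A F : Type*} [CommRing A] [CommRing F] [Nontrivial F] (O : Subring F)
    (δ : A →+* F) : IsDivisibility (fun a b => ∃ c ∈ O, δ b = δ a * c) := by
  refine ⟨fun a => ⟨1, O.one_mem, (mul_one _).symm⟩, ?_, ?_, ?_, ?_⟩
  · rintro a b d ⟨c₁, hc₁, e₁⟩ ⟨c₂, hc₂, e₂⟩
    exact ⟨c₁ * c₂, O.mul_mem hc₁ hc₂, by rw [e₂, e₁, mul_assoc]⟩
  · rintro a b d ⟨c₁, hc₁, e₁⟩ ⟨c₂, hc₂, e₂⟩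
    exact ⟨c₁ - c₂, O.sub_mem hc₁ hc₂, by rw [map_sub, e₁, e₂, mul_sub]⟩
  · rintro a b d ⟨c, hc, e⟩
    exact ⟨c, hc, by rw [map_mul, map_mul, e, mul_right_comm]⟩
  · rintro ⟨c, -, e⟩
    simp at e

theorem IsPValuationRing.isPDivisibility_comap {A F : Type*} [CommRing A] [Field F] [CharZero F]
    {p : ℕ} (hp : p.Prime) {O : ValuationSubring F} (hO : IsPValuationRing p O) (δ : A →+* F) :
    IsPDivisibility p (fun a b => ∃ c ∈ O, δ b = δ a * c) := by
  have hp0 : (p : F) ≠ 0 := Nat.cast_ne_zero.mpr hp.ne_zero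
  obtain ⟨hpO, hK⟩ := (isPValuationRing_iff_kochen hp hp0).mp hO
  refine ⟨isDivisibility_comap O.toSubring δ, ?_, ?_⟩
  · rintro a ha ⟨c, hc, e⟩
    have hδa : δ a ≠ 0 := fun h0 => ha ⟨0, O.zero_mem, by simp [h0]⟩
    rw [map_mul, map_natCast, mul_assoc, mul_left_comm, eq_comm, mul_eq_left₀ hδa] at e
    have hinv : (p : F)⁻¹ ∈ O := eq_inv_of_mul_eq_one_right e ▸ hc
    exact ((ValuationSubring.mem_nonunits_iff_or O).mp hpO).elim hp0 (· hinv)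
  · intro a b
    by_cases hb : δ b = 0
    · exact ⟨0, O.zero_mem, by simp [hb]⟩
    refine ⟨kochen p (δ a / δ b), (hK _).2, ?_⟩
    have hne : (p : F) * ((δ a ^ p * δ b - δ b ^ p * δ a) ^ 2 - (δ b ^ (p + 1)) ^ 2) ≠ 0 := by
      rw [← pow_sub_self_div_mul_pow_succ p hb, mul_pow, ← sub_one_mul]
      exact mul_ne_zero hp0 (mul_ne_zero (sub_ne_zero.mpr (hK _).1) (by simp [hb]))
    simp only [map_mul, map_sub, map_pow, map_natCast, kochen_div p hb]
    rw [mul_div_cancel₀ _ hne]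

namespace IsDivisibility

variable {A : Type*} [CommRing A] {D : A → A → Prop} (h : IsDivisibility D) {a b c d : A}
include h

protected lemma refl (a : A) : D a a := h.1 a

protected lemma trans : D a b → D b c → D a c := h.2.1 a b c

lemma sub : D a b → D a c → D a (b - c) := h.2.2.1 a b c

lemma mul_right (c : A) : D a b → D (a * c) (b * c) := h.2.2.2.1 a b c

lemma not_zero_one : ¬ D 0 1 := h.2.2.2.2

lemma zero_right (a : A) : D a 0 := by
  simpa using h.sub (h.refl a) (h.refl a)

lemma neg (hab : D a b) : D a (-b) := by
  simpa using h.sub (h.zero_right a) hab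

lemma add (hab : D a b) (hac : D a c) : D a (b + c) := by
  simpa using h.sub hab (h.neg hac)

lemma natCast_mul (hab : D a b) (n : ℕ) : D a (n * b) := by
  induction n with
  | zero => simpa using h.zero_right a
  | succ n ih => simpa [add_mul] using h.add ih hab

lemma mul (hab : D a b) (hcd : D c d) : D (a * c) (b * d) :=
  h.trans (h.mul_right c hab) (by simpa only [mul_comm b] using h.mul_right b hcd)

lemma pow (hab : D a b) (n : ℕ) : D (a ^ n) (b ^ n) := by
  induction n with
  | zero => simpa using h.refl 1
  | succ n ih => simpa only [pow_succ] using h.mul ih hab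

lemma of_zero_dvd (hb : D 0 b) (a : A) : D a b :=
  h.trans (h.zero_right a) hb

def support : Ideal A where
  carrier := {a | D 0 a}
  add_mem' := h.add
  zero_mem' := h.refl 0
  smul_mem' c x hx := by simpa [mul_comm] using h.mul_right c hx

@[simp]
lemma mem_support : a ∈ h.support ↔ D 0 a := Iff.rfl

lemma support_ne_top : h.support ≠ ⊤ := fun htop =>
  h.not_zero_one (show (1 : A) ∈ h.support from htop ▸ Submodule.mem_top)

lemma mem_radical_support_of_dvd (hab : D a b) (ha : a ∈ h.support.radical) :
    b ∈ h.support.radical := by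
  obtain ⟨n, hn⟩ := ha
  exact ⟨n, h.trans hn (h.pow hab n)⟩

lemma localization (hb : b ∉ h.support.radical) :
    IsDivisibility (fun x y => ∃ k : ℕ, D (x * b ^ k) (y * b ^ k)) := by
  have mono {x y : A} {k m : ℕ} (hkm : k ≤ m) (hxy : D (x * b ^ k) (y * b ^ k)) :
      D (x * b ^ m) (y * b ^ m) := by
    obtain ⟨j, rfl⟩ := Nat.exists_eq_add_of_le hkm
    simpa only [pow_add, mul_assoc] using h.mul_right (b ^ j) hxy
  refine ⟨fun x => ⟨0, h.refl _⟩, ?_, ?_, ?_, ?_⟩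
  · rintro x y z ⟨k, hk⟩ ⟨m, hm⟩
    exact ⟨max k m, h.trans (mono (le_max_left k m) hk) (mono (le_max_right k m) hm)⟩
  · rintro x y z ⟨k, hk⟩ ⟨m, hm⟩
    exact ⟨max k m, by
      simpa only [sub_mul] using h.sub (mono (le_max_left k m) hk) (mono (le_max_right k m) hm)⟩
  · rintro x y c ⟨k, hk⟩
    exact ⟨k, by simpa only [mul_right_comm _ c] using h.mul_right c hk⟩
  · rintro ⟨k, hk⟩
    exact hb ⟨k, by simpa using hk⟩

variable {K : Type*} [Field K] (δ : A →+* K)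

def fracSubring : Subring K where
  carrier := {c | ∃ Y W, δ Y ≠ 0 ∧ D Y W ∧ c * δ Y = δ W}
  one_mem' := ⟨1, 1, by simp, h.refl 1, by simp⟩
  zero_mem' := ⟨1, 0, by simp, h.zero_right 1, by simp⟩
  mul_mem' := by
    rintro c₁ c₂ ⟨Y₁, W₁, hY₁, d₁, e₁⟩ ⟨Y₂, W₂, hY₂, d₂, e₂⟩
    refine ⟨Y₁ * Y₂, W₁ * W₂, by simp [hY₁, hY₂], h.mul d₁ d₂, ?_⟩
    rw [map_mul, map_mul, ← e₁, ← e₂]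
    ring
  add_mem' := by
    rintro c₁ c₂ ⟨Y₁, W₁, hY₁, d₁, e₁⟩ ⟨Y₂, W₂, hY₂, d₂, e₂⟩
    refine ⟨Y₁ * Y₂, W₁ * Y₂ + Y₁ * W₂, by simp [hY₁, hY₂],
      h.add (h.mul d₁ (h.refl Y₂)) (h.mul (h.refl Y₁) d₂), ?_⟩
    simp only [map_add, map_mul, ← e₁, ← e₂]
    ring
  neg_mem' := by
    rintro c ⟨Y, W, hY, d, e⟩
    exact ⟨Y, -W, hY, h.neg d, by rw [map_neg, ← e, neg_mul]⟩

lemma div_mem_fracSubring (hab : D a b) (ha : δ a ≠ 0) : δ b / δ a ∈ h.fracSubring δ :=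
  ⟨a, b, ha, hab, div_mul_cancel₀ _ ha⟩

end IsDivisibility

namespace IsPDivisibility

variable {A : Type*} [CommRing A] {p : ℕ} {D : A → A → Prop}

section

variable (h : IsPDivisibility p D) {a b : A}
include h

lemma isDivisibility : IsDivisibility D := h.1

lemma not_natCast_mul_dvd (ha : ¬ D 0 a) : ¬ D (p * a) a := h.2.1 a ha

lemma kochen_dvd (a b : A) :
    D (p * ((a ^ p * b - b ^ p * a) ^ 2 - (b ^ (p + 1)) ^ 2))
      ((a ^ p * b - b ^ p * a) * b ^ (p + 1)) :=
  h.2.2 a b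

abbrev support : Ideal A := h.isDivisibility.support

lemma localization (hb : b ∉ h.support.radical) :
    IsPDivisibility p (fun x y => ∃ k : ℕ, D (x * b ^ k) (y * b ^ k)) := by
  refine ⟨h.isDivisibility.localization hb, ?_, fun x y => ⟨0, by simpa using h.kochen_dvd x y⟩⟩
  rintro x hx ⟨k, hk⟩
  refine h.not_natCast_mul_dvd (a := x * b ^ k) (fun h0 => hx ⟨k, by simpa using h0⟩) ?_
  simpa only [mul_assoc] using hk

/-- With `z = Y - p * W`, expanding `Y ^ n = (p * W + z) ^ n` shows `p * Y ^ n ∣ Y ^ n` as soon as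
`0 ∣ z ^ n`, which axiom (6) only allows if `0 ∣ Y ^ n`. -/
lemma mem_radical_support_of_sub_natCast_mul {Y W : A} (hYW : D Y W)
    (hz : Y - p * W ∈ h.support.radical) : Y ∈ h.support.radical := by
  have hD := h.isDivisibility
  obtain ⟨z, hz_def⟩ : ∃ z, z = Y - p * W := ⟨_, rfl⟩
  rw [← hz_def] at hz
  obtain ⟨n, hn⟩ := hz
  have hYz : D Y z := hz_def ▸ hD.sub (hD.refl Y) (hD.natCast_mul hYW p)
  have key : ∀ k m, k + m = n → D (p * Y ^ n) (Y ^ k * z ^ m) := by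
    intro k
    induction k with
    | zero =>
      intro m hm
      rw [zero_add] at hm
      subst hm
      simpa using hD.of_zero_dvd hn (p * Y ^ m)
    | succ k ih =>
      intro m hm
      have expand : Y ^ (k + 1) * z ^ m = p * (W * Y ^ k * z ^ m) + Y ^ k * z ^ (m + 1) := by
        linear_combination -(Y ^ k * z ^ m) * hz_def
      have split : Y ^ n = Y * Y ^ k * Y ^ m := by rw [← hm]; ring
      rw [expand]
      refine hD.add ?_ (ih (m + 1) (by omega))
      rw [split]
      exact hD.mul (hD.refl _) (hD.mul (hD.mul hYW (hD.refl _)) (hD.pow hYz m))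
  by_contra hY
  exact h.not_natCast_mul_dvd (fun h0 => hY ⟨n, h0⟩) (by simpa using key n 0 (add_zero n))

end

lemma sSup_of_isChain {c : Set (A → A → Prop)} (hc : ∀ E ∈ c, IsPDivisibility p E)
    (hchain : IsChain (· ≤ ·) c) {E₀ : A → A → Prop} (hE₀ : E₀ ∈ c) :
    IsPDivisibility p (sSup c) := by
  have mem (a b : A) : sSup c a b ↔ ∃ E ∈ c, E a b := by simp
  have hdir := hchain.directedOn
  simp only [IsPDivisibility, IsDivisibility, mem]
  refine ⟨⟨fun a => ⟨E₀, hE₀, (hc E₀ hE₀).isDivisibility.refl a⟩, ?_, ?_, ?_, ?_⟩, ?_, ?_⟩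
  · rintro a b d ⟨E₁, h₁, hab⟩ ⟨E₂, h₂, hbd⟩
    obtain ⟨E, hE, le₁, le₂⟩ := hdir E₁ h₁ E₂ h₂
    exact ⟨E, hE, (hc E hE).isDivisibility.trans (le₁ _ _ hab) (le₂ _ _ hbd)⟩
  · rintro a b d ⟨E₁, h₁, hab⟩ ⟨E₂, h₂, had⟩
    obtain ⟨E, hE, le₁, le₂⟩ := hdir E₁ h₁ E₂ h₂
    exact ⟨E, hE, (hc E hE).isDivisibility.sub (le₁ _ _ hab) (le₂ _ _ had)⟩
  · rintro a b d ⟨E, hE, hab⟩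
    exact ⟨E, hE, (hc E hE).isDivisibility.mul_right d hab⟩
  · rintro ⟨E, hE, h01⟩
    exact (hc E hE).isDivisibility.not_zero_one h01
  · rintro a ha ⟨E, hE, hpa⟩
    exact (hc E hE).not_natCast_mul_dvd (fun h0 => ha ⟨E, hE, h0⟩) hpa
  · exact fun a b => ⟨E₀, hE₀, (hc E₀ hE₀).kochen_dvd a b⟩

lemma exists_maximal (h : IsPDivisibility p D) :
    ∃ D' : A → A → Prop, Maximal (IsPDivisibility p) D' := by
  obtain ⟨D', -, hmax⟩ := zorn_le_nonempty₀ {E | IsPDivisibility p E}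
    (fun c hc hchain E₀ hE₀ => ⟨sSup c, sSup_of_isChain hc hchain hE₀, fun E => le_sSup⟩) D h
  exact ⟨D', hmax⟩

lemma dvd_of_mul_pow_dvd (hmax : Maximal (IsPDivisibility p) D) {b x y : A}
    (hb : b ∉ hmax.prop.support.radical) {n : ℕ} (hxy : D (x * b ^ n) (y * b ^ n)) : D x y :=
  hmax.le_of_ge (hmax.prop.localization hb) (fun u v huv => ⟨0, by simpa using huv⟩) x y ⟨n, hxy⟩

lemma isPrime_radical_support (hmax : Maximal (IsPDivisibility p) D) :
    hmax.prop.support.radical.IsPrime := by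
  refine ⟨mt Ideal.radical_eq_top.mp hmax.prop.isDivisibility.support_ne_top, ?_⟩
  rintro x y ⟨n, hn⟩
  rw [or_iff_not_imp_left]
  intro hx
  refine ⟨n, dvd_of_mul_pow_dvd hmax hx (n := n) ?_⟩
  simpa [mul_pow, mul_comm] using hn

section Fraction

variable (h : IsPDivisibility p D) {K : Type*} [Field K] {δ : A →+* K}
  (hker : RingHom.ker δ = h.support.radical)
include hker

lemma map_eq_zero_of_dvd {a b : A} (hab : D a b) (ha : δ a = 0) : δ b = 0 := by
  rw [← RingHom.mem_ker, hker] at ha ⊢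
  exact h.isDivisibility.mem_radical_support_of_dvd hab ha

lemma natCast_mul_ne_one {c : K} (hc : c ∈ h.isDivisibility.fracSubring δ) :
    (p : K) * c ≠ 1 := by
  obtain ⟨Y, W, hY, hYW, e⟩ := hc
  intro hpc
  apply hY
  rw [← RingHom.mem_ker, hker]
  refine h.mem_radical_support_of_sub_natCast_mul hYW ?_
  rw [← hker, RingHom.mem_ker, map_sub, map_mul, map_natCast, ← e]
  linear_combination -(δ Y) * hpc

lemma kochen_mem_fracSubring (hp : (p : K) ≠ 0) {a b : A} (hb : δ b ≠ 0) :
    ((δ a / δ b) ^ p - δ a / δ b) ^ 2 ≠ 1 ∧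
      kochen p (δ a / δ b) ∈ h.isDivisibility.fracSubring δ := by
  set u := a ^ p * b - b ^ p * a
  set w := b ^ (p + 1)
  set t := (δ a / δ b) ^ p - δ a / δ b
  have hw : δ w ≠ 0 := by simp [w, hb]
  have hu : δ u = t * δ w := by
    simp only [u, w, t, map_sub, map_mul, map_pow]
    exact (pow_sub_self_div_mul_pow_succ p hb).symm
  have hden : δ (p * (u ^ 2 - w ^ 2)) = p * (t ^ 2 - 1) * δ w ^ 2 := by
    simp only [map_mul, map_sub, map_pow, map_natCast, hu]
    ring
  have hden0 : δ (p * (u ^ 2 - w ^ 2)) ≠ 0 := by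
    by_cases hu0 : δ u = 0
    · simp [hu0, hw, hp, map_sub]
    · intro h0
      have huw := h.map_eq_zero_of_dvd hker (h.kochen_dvd a b) h0
      rw [map_mul] at huw
      exact mul_ne_zero hu0 hw huw
  refine ⟨fun ht => hden0 (by rw [hden, ht, sub_self, mul_zero, zero_mul]), ?_⟩
  have : kochen p (δ a / δ b) = δ (u * w) / δ (p * (u ^ 2 - w ^ 2)) := by
    simp only [kochen_div p hb, u, w, map_mul, map_sub, map_pow, map_natCast]
  rw [this]
  exact h.isDivisibility.div_mem_fracSubring δ (h.kochen_dvd a b) hden0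

end Fraction

end IsPDivisibility

lemma Subring.exists_valuationSubring_mem_nonunits {K : Type*} [Field K] (G : Subring K) {x : K}
    (hx : x ∈ G) (hnu : ∀ c ∈ G, x * c ≠ 1) :
    ∃ O : ValuationSubring K, G ≤ O.toSubring ∧ x ∈ O.nonunits := by
  have hspan : Ideal.span {(⟨x, hx⟩ : G)} ≠ ⊤ := by
    rw [Ne, Ideal.span_singleton_eq_top, isUnit_iff_exists_inv]
    rintro ⟨c, hc⟩
    exact hnu c c.2 (congrArg Subtype.val hc)
  obtain ⟨O, hGO, hnon⟩ := Ideal.image_subset_nonunits_valuationSubring _ hspan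
  exact ⟨O, hGO, hnon ⟨_, Ideal.subset_span rfl, rfl⟩⟩

lemma Ideal.exists_eq_div_residueField {A : Type*} [CommRing A] (r : Ideal A) [r.IsPrime]
    (z : r.ResidueField) :
    ∃ a b : A, algebraMap A r.ResidueField b ≠ 0 ∧
      z = algebraMap A r.ResidueField a / algebraMap A r.ResidueField b := by
  obtain ⟨x, y, hy, rfl⟩ := IsFractionRing.div_surjective (A ⧸ r) z
  obtain ⟨a, rfl⟩ := Ideal.Quotient.mk_surjective x
  obtain ⟨b, rfl⟩ := Ideal.Quotient.mk_surjective y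
  refine ⟨a, b, ?_, rfl⟩
  rw [← Ideal.algebraMap_quotient_residueField_mk]
  exact IsFractionRing.to_map_ne_zero_of_mem_nonZeroDivisors hy

universe u

theorem IsPDivisibility.exists_pValuationRing {A : Type u} [CommRing A] [Algebra ℚ A] {p : ℕ}
    (hp : p.Prime) {D : A → A → Prop} (h : IsPDivisibility p D) :
    ∃ (F : Type u) (_ : Field F) (_ : CharZero F) (O : ValuationSubring F) (_ : A →+* F),
      IsPValuationRing p O := by
  obtain ⟨D', hmax⟩ := h.exists_maximal
  set r := hmax.prop.support.radical
  have := IsPDivisibility.isPrime_radical_support hmax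
  set δ := algebraMap A r.ResidueField
  have hker : RingHom.ker δ = r := r.ker_algebraMap_residueField
  have : CharZero r.ResidueField :=
    charZero_of_injective_ringHom (δ.comp (algebraMap ℚ A)).injective
  have hp0 : (p : r.ResidueField) ≠ 0 := Nat.cast_ne_zero.mpr hp.ne_zero
  set G := hmax.prop.isDivisibility.fracSubring δ
  obtain ⟨O, hGO, hpO⟩ := G.exists_valuationSubring_mem_nonunits (natCast_mem G p)
    fun c hc => hmax.prop.natCast_mul_ne_one hker hc
  refine ⟨_, inferInstance, inferInstance, O, δ, (isPValuationRing_iff_kochen hp hp0).mpr ⟨hpO, ?_⟩⟩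
  intro z
  obtain ⟨a, b, hb, rfl⟩ := r.exists_eq_div_residueField z
  exact (hmax.prop.kochen_mem_fracSubring hker hp0 hb).imp_right (@hGO _)

theorem stmt_13 (p : ℕ) (hp : p.Prime) {A : Type u} [CommRing A] [Algebra ℚ A] :
    (∃ D : A → A → Prop, IsPDivisibility p D) ↔
    ∃ (F : Type u) (_ : Field F) (_ : CharZero F) (O : ValuationSubring F)
      (_ : A →+* F), IsPValuationRing p O := by
  constructor
  · rintro ⟨D, hD⟩
    exact hD.exists_pValuationRing hp
  · rintro ⟨F, _, _, O, δ, hO⟩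
    exact ⟨_, hO.isPDivisibility_comap hp δ⟩
end
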